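/- arXiv:2208.08310 — 3 statements merged into one kernel-verified Lean document; each statement's English description precedes it below -/
import Mathlib

section
/- The unroll of a finite functional graph from a periodic point has exactly one infinite path starting from the root: if α is a finite type, f : α → α, and v is a periodic point of f (f^[n] v = v for some n ≥ 1), then there exists a unique sequence s : ℕ → α with s 0 = v and f (s (i+1)) = s i for all i : ℕ. -/
namespace DDS

/-- A homomorphism of digraphs `(γ, E) → (δ, E')` is a map preserving edges. -/
def IsHom {γ : Type*} {δ : Type*} (E : γ → γ → Prop) (E' : δ → δ → Prop) (τ : γ → δ) : Prop :=
  ∀ ⦃u v⦄, E u v → E' (τ u) (τ v)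

/-- Two digraphs are isomorphic if there is an edge-preserving (in both directions) bijection. -/
def Isomorphic {γ : Type*} {δ : Type*} (E : γ → γ → Prop) (E' : δ → δ → Prop) : Prop :=
  ∃ e : γ ≃ δ, ∀ u v, E u v ↔ E' (e u) (e v)

/-- The number of digraph homomorphisms from `(γ, E)` to `(δ, E')`. -/
noncomputable def homCount (γ : Type*) (δ : Type*) (E : γ → γ → Prop) (E' : δ → δ → Prop) : ℕ :=
  Nat.card {τ : γ → δ // IsHom E E' τ}

/-- An in-tree: a root and a parent map such that the root is a fixed point and every
vertex reaches the root by iterating the parent map. -/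
structure InTree (V : Type*) where
  root : V
  parent : V → V
  parent_root : parent root = root
  reaches_root : ∀ v, ∃ k, parent^[k] v = root

namespace InTree

variable {V : Type*}

/-- Edges of an in-tree are directed towards the root. -/
def Edge (T : InTree V) (v w : V) : Prop := v ≠ T.root ∧ w = T.parent v

/-- The height of a vertex: the least `k` with `parent^[k] v = root`. -/
noncomputable def height (T : InTree V) (v : V) : ℕ := sInf {k | T.parent^[k] v = T.root}

lemma height_spec (T : InTree V) (v : V) : T.parent^[T.height v] v = T.root :=
  Nat.sInf_mem (T.reaches_root v)

@[simp] lemma height_root (T : InTree V) : T.height T.root = 0 :=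
  Nat.sInf_eq_zero.mpr (Or.inl (by simp))

lemma height_eq_zero_iff (T : InTree V) {v : V} : T.height v = 0 ↔ v = T.root := by
  constructor
  · intro h
    have hs := T.height_spec v
    rw [h] at hs
    simpa using hs
  · rintro rfl
    exact T.height_root

lemma height_parent (T : InTree V) {v : V} (hv : v ≠ T.root) :
    T.height v = T.height (T.parent v) + 1 := by
  have h1 : T.height v ≠ 0 := fun h => hv (T.height_eq_zero_iff.mp h)
  obtain ⟨m, hm⟩ := Nat.exists_eq_succ_of_ne_zero h1
  have hsp : T.parent^[T.height v] v = T.root := T.height_spec v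
  rw [hm, Function.iterate_succ_apply] at hsp
  have hle : T.height (T.parent v) ≤ m := Nat.sInf_le hsp
  have hge : T.height v ≤ T.height (T.parent v) + 1 := by
    apply Nat.sInf_le
    show T.parent^[T.height (T.parent v) + 1] v = T.root
    rw [Function.iterate_succ_apply]
    exact T.height_spec (T.parent v)
  omega

lemma height_parent_le (T : InTree V) (v : V) : T.height (T.parent v) ≤ T.height v := by
  by_cases hv : v = T.root
  · subst hv; rw [T.parent_root]
  · rw [T.height_parent hv]; omega

/-- The height of a finite in-tree: the maximum height of a vertex. -/
noncomputable def treeHeight [Fintype V] (T : InTree V) : ℕ := Finset.univ.sup T.height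

section Star

variable {V₁ V₂ : Type*} (T₁ : InTree V₁) (T₂ : InTree V₂)

/-- Vertices of the `⋆` product: pairs of vertices of equal height. -/
def StarVertex := {x : V₁ × V₂ // T₁.height x.1 = T₂.height x.2}

lemma star_parent_mem (x : V₁ × V₂) (hx : T₁.height x.1 = T₂.height x.2) :
    T₁.height (T₁.parent x.1) = T₂.height (T₂.parent x.2) := by
  by_cases h : x.1 = T₁.root
  · have h2 : x.2 = T₂.root := by
      apply T₂.height_eq_zero_iff.mp
      rw [← hx, h, T₁.height_root]
    rw [h, h2, T₁.parent_root, T₂.parent_root, T₁.height_root, T₂.height_root]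
  · have h2 : x.2 ≠ T₂.root := by
      intro hc
      apply h
      apply T₁.height_eq_zero_iff.mp
      rw [hx, hc, T₂.height_root]
    have e1 := T₁.height_parent h
    have e2 := T₂.height_parent h2
    omega

/-- The parent map of the `⋆` product. -/
def starParent (x : StarVertex T₁ T₂) : StarVertex T₁ T₂ :=
  ⟨(T₁.parent x.1.1, T₂.parent x.1.2), star_parent_mem T₁ T₂ x.1 x.2⟩

lemma starParent_iterate (k : ℕ) (x : StarVertex T₁ T₂) :
    ((starParent T₁ T₂)^[k] x).1 = (T₁.parent^[k] x.1.1, T₂.parent^[k] x.1.2) := by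
  induction k generalizing x with
  | zero => simp
  | succ k ih =>
      rw [Function.iterate_succ_apply, Function.iterate_succ_apply,
        Function.iterate_succ_apply, ih]
      rfl

/-- The `⋆` product of two in-trees. -/
def star : InTree (StarVertex T₁ T₂) where
  root := ⟨(T₁.root, T₂.root), by simp⟩
  parent := starParent T₁ T₂
  parent_root := by
    apply Subtype.ext
    show (T₁.parent T₁.root, T₂.parent T₂.root) = (T₁.root, T₂.root)
    rw [T₁.parent_root, T₂.parent_root]
  reaches_root := by
    intro x
    refine ⟨T₁.height x.1.1, Subtype.ext ?_⟩
    rw [starParent_iterate]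
    have h1 : T₁.parent^[T₁.height x.1.1] x.1.1 = T₁.root := T₁.height_spec _
    have h2 : T₂.parent^[T₁.height x.1.1] x.1.2 = T₂.root := by
      rw [x.2]; exact T₂.height_spec _
    show (_, _) = (T₁.root, T₂.root)
    rw [h1, h2]

end Star

section Cut

variable (T : InTree V) (t : ℕ)

/-- Vertices of the cut at level `t`: vertices of height at most `t`. -/
def CutVertex := {v : V // T.height v ≤ t}

/-- The parent map of the cut. -/
def cutParent (x : CutVertex T t) : CutVertex T t :=
  ⟨T.parent x.1, le_trans (T.height_parent_le x.1) x.2⟩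

lemma cutParent_iterate (k : ℕ) (x : CutVertex T t) :
    ((cutParent T t)^[k] x).1 = T.parent^[k] x.1 := by
  induction k generalizing x with
  | zero => simp
  | succ k ih =>
      rw [Function.iterate_succ_apply, Function.iterate_succ_apply, ih]
      rfl

/-- The cut of an in-tree at level `t`: the sub-in-tree induced on vertices of height `≤ t`. -/
def cut : InTree (CutVertex T t) where
  root := ⟨T.root, by simp⟩
  parent := cutParent T t
  parent_root := Subtype.ext T.parent_root
  reaches_root := fun x =>
    ⟨T.height x.1, Subtype.ext (by rw [cutParent_iterate]; exact T.height_spec x.1)⟩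

end Cut

end InTree

section Unroll

variable {α : Type*} (f : α → α) (v : α)

/-- Vertices of the unroll of the functional graph of `f` from `v`. -/
def UnrollVertex := {ui : α × ℕ // f^[ui.2] ui.1 = v}

/-- The parent map of the unroll: `(u, i+1) ↦ (f u, i)`, fixing the root `(v, 0)`. -/
def unrollParent : UnrollVertex f v → UnrollVertex f v
  | ⟨(u, 0), h⟩ => ⟨(u, 0), h⟩
  | ⟨(u, i+1), h⟩ => ⟨(f u, i), by rw [← Function.iterate_succ_apply]; exact h⟩

lemma unrollParent_iterate :
    ∀ (i : ℕ) (u : α) (h : f^[i] u = v),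
      (unrollParent f v)^[i] ⟨(u, i), h⟩ = ⟨(v, 0), rfl⟩ := by
  intro i
  induction i with
  | zero =>
      intro u h
      have hu : u = v := by simpa using h
      subst hu
      rfl
  | succ i ih =>
      intro u h
      show (unrollParent f v)^[i] (unrollParent f v ⟨(u, i + 1), h⟩) = _
      show (unrollParent f v)^[i] ⟨(f u, i), _⟩ = _
      exact ih (f u) _

/-- The unroll of the functional graph of `f : α → α` from the point `v`. -/
def unroll : InTree (UnrollVertex f v) where
  root := ⟨(v, 0), rfl⟩
  parent := unrollParent f v
  parent_root := rfl
  reaches_root := fun x => ⟨x.1.2, by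
    obtain ⟨⟨u, i⟩, h⟩ := x
    exact unrollParent_iterate f v i u h⟩

end Unroll

section FG

/-- The number of periodic points of `f`. -/
noncomputable def periodicCount {α : Type*} (f : α → α) : ℕ :=
  Nat.card {x : α // ∃ n, 1 ≤ n ∧ f^[n] x = x}

/-- A functional graph is connected if the equivalence relation generated by
`x ∼ f x` relates all pairs of points. -/
def FGConnected {α : Type*} (f : α → α) : Prop :=
  ∀ x y : α, Relation.EqvGen (fun u w => f u = w) x y

/-- Isomorphism of functional graphs. -/
def FGIso {α β : Type*} (f : α → α) (g : β → β) : Prop :=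
  ∃ e : α ≃ β, ∀ x, e (f x) = g (e x)

/-- The product of two functional graphs. -/
def prodMap {α γ : Type*} (f : α → α) (h : γ → γ) : α × γ → α × γ :=
  fun z => (f z.1, h z.2)

/-- `FGContains f h g` means the functional graph of `g` is (isomorphic to) a union of
connected components of the product `f × h`. -/
def FGContains {α γ β : Type*} (f : α → α) (h : γ → γ) (g : β → β) : Prop :=
  ∃ e : β → α × γ, Function.Injective e ∧ e ∘ g = prodMap f h ∘ e ∧
    ∀ z, prodMap f h z ∈ Set.range e → z ∈ Set.range e

end FG

end DDS

open DDS DDS.InTree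

/-! `f` permutes its periodic points. In a finite type every term of a backward orbit is
periodic, so a backward orbit starting at a periodic point is forced to follow the inverse of
this permutation. -/

open Set

namespace Function

variable {α : Type*} {f : α → α} {s t : ℕ → α}

def IsBackwardOrbit (f : α → α) (s : ℕ → α) : Prop :=
  ∀ i, f (s (i + 1)) = s i

namespace IsBackwardOrbit

theorem iterate_apply_add (hs : IsBackwardOrbit f s) (i d : ℕ) : f^[d] (s (i + d)) = s i := by
  induction d with
  | zero => rfl
  | succ d ih => rw [iterate_succ_apply, ← add_assoc, hs, ih]

/-- In a finite type, `k ↦ s (i + k)` repeats a value, which closes a cycle below `s i`. -/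
theorem mem_periodicPts [Finite α] (hs : IsBackwardOrbit f s) (i : ℕ) :
    s i ∈ periodicPts f := by
  obtain ⟨j, l, hjl, hrep⟩ := Finite.exists_ne_map_eq_of_infinite fun k => s (i + k)
  wlog hlt : j < l generalizing j l
  · exact this l j hjl.symm hrep.symm (hjl.lt_or_gt.resolve_left hlt)
  have hcycle : IsPeriodicPt f (l - j) (s (i + l)) := by
    have := hs.iterate_apply_add (i + j) (l - j)
    rwa [add_assoc, Nat.add_sub_cancel' hlt.le, hrep] at this
  rw [← hs.iterate_apply_add i l]
  exact (bijOn_periodicPts f).mapsTo.iterate l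
    (mk_mem_periodicPts (Nat.sub_pos_of_lt hlt) hcycle)

theorem eq_of_finite [Finite α] (hs : IsBackwardOrbit f s) (ht : IsBackwardOrbit f t)
    (h0 : s 0 = t 0) : s = t := by
  funext i
  induction i with
  | zero => exact h0
  | succ i ih =>
    exact (bijOn_periodicPts f).injOn (hs.mem_periodicPts _) (ht.mem_periodicPts _)
      (by rw [hs, ht, ih])

end IsBackwardOrbit

theorem exists_isBackwardOrbit_of_mem_periodicPts {v : α} (hv : v ∈ periodicPts f) :
    ∃ s, s 0 = v ∧ IsBackwardOrbit f s := by
  have : Nonempty α := ⟨v⟩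
  set g := invFunOn f (periodicPts f)
  have hsurj : SurjOn f (periodicPts f) (periodicPts f) := (bijOn_periodicPts f).surjOn
  have hg : ∀ i, g^[i] v ∈ periodicPts f := fun i => hsurj.mapsTo_invFunOn.iterate i hv
  refine ⟨fun i => g^[i] v, rfl, fun i => ?_⟩
  show f (g^[i + 1] v) = g^[i] v
  rw [iterate_succ_apply']
  exact hsurj.rightInvOn_invFunOn (hg i)

end Function

/-- The unroll of a finite functional graph from a periodic point has exactly one infinite
path starting from the root: there is a unique backward orbit through a periodic point. -/
theorem unique_infinite_path {α : Type*} [Fintype α] (f : α → α) (v : α)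
    (hv : ∃ n, 1 ≤ n ∧ f^[n] v = v) :
    ∃! s : ℕ → α, s 0 = v ∧ ∀ i, f (s (i + 1)) = s i := by
  obtain ⟨n, hn, hnv⟩ := hv
  obtain ⟨s, hs0, hs⟩ :=
    Function.exists_isBackwardOrbit_of_mem_periodicPts (Function.mk_mem_periodicPts hn hnv)
  refine ⟨s, ⟨hs0, hs⟩, fun t ⟨ht0, ht⟩ => ?_⟩
  exact Function.IsBackwardOrbit.eq_of_finite ht hs (ht0.trans hs0.symm)
end

section
/- Cancellation over unrolls: let f : α → α, h : γ → γ, h' : δ → δ, and g : β → β be maps on finite types, let a be a periodic point of f, x of h, y of h', and b of g. If the digraph of U(f,a) ⋆ U(h,x) is isomorphic to the digraph of U(g,b), and the digraph of U(f,a) ⋆ U(h',y) is also isomorphic to the digraph of U(g,b), then the digraphs of the unrolls U(h,x) and U(h',y) are isomorphic. -/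
/-!
Keep only heights and parents of an in-tree (a `LevelledMap`); then `⋆` is the fibre product
over heights, and a homomorphism into a product is a pair of homomorphisms. Counting
homomorphisms from a finite `X` into the cuts at height `t` therefore gives
`hom(X, A_t) · hom(X, B_t) = hom(X, D_t) = hom(X, A_t) · hom(X, C_t)` for `A = U(f,a)`,
`B = U(h,x)`, `C = U(h',y)`, `D = U(g,b)`. As `a` is periodic, `A` contains an infinite ray, so
`hom(X, A_t) ≠ 0` whenever `X` fits below height `t` (otherwise both sides vanish). Hence `B_t`
and `C_t` have equal homomorphism counts from every finite `X`, and Lovász's argument makes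
them isomorphic. All cuts are finite, so by König's lemma isomorphisms of the cuts can be chosen
compatibly and glue to an isomorphism `B ≅ C`.
-/

universe u v w z

/-- Unlike in-trees, these are closed under quotients by compatible equivalences
(`Congruence.quotient`), which Lovász's argument needs. -/
structure LevelledMap (V : Type u) where
  height : V → ℕ
  parent : V → V
  height_parent : ∀ v, height (parent v) = height v - 1

namespace LevelledMap

variable {V : Type u} {W : Type v} {Z : Type z}

structure IsHom (S : LevelledMap V) (T : LevelledMap W) (φ : V → W) : Prop where
  height_map : ∀ v, T.height (φ v) = S.height v
  map_parent : ∀ v, φ (S.parent v) = T.parent (φ v)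

lemma IsHom.comp {S : LevelledMap V} {T : LevelledMap W} {U : LevelledMap Z} {φ : V → W}
    {ψ : W → Z} (hφ : S.IsHom T φ) (hψ : T.IsHom U ψ) : S.IsHom U (ψ ∘ φ) :=
  ⟨fun v => (hψ.height_map _).trans (hφ.height_map v),
    fun v => by simp only [Function.comp_apply, hφ.map_parent, hψ.map_parent]⟩

lemma IsHom.symm {S : LevelledMap V} {T : LevelledMap W} {e : V ≃ W} (h : S.IsHom T e) :
    T.IsHom S e.symm :=
  ⟨fun w => by simpa using (h.height_map (e.symm w)).symm,
    fun w => e.injective (by simp [h.map_parent])⟩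

def Hom (S : LevelledMap V) (T : LevelledMap W) := {φ : V → W // S.IsHom T φ}

instance [Finite V] [Finite W] (S : LevelledMap V) (T : LevelledMap W) : Finite (S.Hom T) :=
  Subtype.finite

def Iso (S : LevelledMap V) (T : LevelledMap W) := {e : V ≃ W // S.IsHom T e}

def Isomorphic (S : LevelledMap V) (T : LevelledMap W) : Prop := Nonempty (S.Iso T)

def Iso.symm {S : LevelledMap V} {T : LevelledMap W} (e : S.Iso T) : T.Iso S :=
  ⟨e.1.symm, e.2.symm⟩

def Iso.trans {S : LevelledMap V} {T : LevelledMap W} {U : LevelledMap Z} (e : S.Iso T)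
    (e' : T.Iso U) : S.Iso U :=
  ⟨e.1.trans e'.1, e.2.comp e'.2⟩

lemma Isomorphic.symm {S : LevelledMap V} {T : LevelledMap W} (h : S.Isomorphic T) :
    T.Isomorphic S :=
  h.map Iso.symm

lemma Isomorphic.trans {S : LevelledMap V} {T : LevelledMap W} {U : LevelledMap Z}
    (h : S.Isomorphic T) (h' : T.Isomorphic U) : S.Isomorphic U :=
  h.elim fun e => h'.elim fun e' => ⟨e.trans e'⟩

noncomputable def homCount (X : LevelledMap Z) (T : LevelledMap W) : ℕ := Nat.card (X.Hom T)

noncomputable def injHomCount (X : LevelledMap Z) (T : LevelledMap W) : ℕ :=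
  Nat.card {φ : X.Hom T // Function.Injective φ.1}

def Iso.homEquiv {T : LevelledMap W} {W' : Type w} {T' : LevelledMap W'} (e : T.Iso T')
    (X : LevelledMap Z) : X.Hom T ≃ X.Hom T' where
  toFun φ := ⟨e.1 ∘ φ.1, φ.2.comp e.2⟩
  invFun φ := ⟨e.1.symm ∘ φ.1, φ.2.comp e.2.symm⟩
  left_inv φ := Subtype.ext (funext fun z => e.1.symm_apply_apply (φ.1 z))
  right_inv φ := Subtype.ext (funext fun z => e.1.apply_symm_apply (φ.1 z))

lemma Isomorphic.homCount_eq {T : LevelledMap W} {W' : Type w} {T' : LevelledMap W'}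
    (h : T.Isomorphic T') (X : LevelledMap Z) : homCount X T = homCount X T' :=
  h.elim fun e => Nat.card_congr (e.homEquiv X)

section Prod

variable (S : LevelledMap V) (T : LevelledMap W)

def prod : LevelledMap {x : V × W // S.height x.1 = T.height x.2} where
  height x := S.height x.1.1
  parent x := ⟨(S.parent x.1.1, T.parent x.1.2), by rw [S.height_parent, T.height_parent, x.2]⟩
  height_parent x := S.height_parent _

def homProdEquiv (X : LevelledMap Z) : X.Hom (S.prod T) ≃ X.Hom S × X.Hom T where
  toFun φ := (⟨fun z => (φ.1 z).1.1, fun z => φ.2.height_map z,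
      fun z => congrArg (fun p => p.1.1) (φ.2.map_parent z)⟩,
    ⟨fun z => (φ.1 z).1.2, fun z => (φ.1 z).2.symm.trans (φ.2.height_map z),
      fun z => congrArg (fun p => p.1.2) (φ.2.map_parent z)⟩)
  invFun ψ := ⟨fun z => ⟨(ψ.1.1 z, ψ.2.1 z), by rw [ψ.1.2.height_map, ψ.2.2.height_map]⟩,
    fun z => ψ.1.2.height_map z,
    fun z => Subtype.ext (Prod.ext (ψ.1.2.map_parent z) (ψ.2.2.map_parent z))⟩
  left_inv _ := rfl
  right_inv _ := rfl

lemma homCount_prod (X : LevelledMap Z) : homCount X (S.prod T) = homCount X S * homCount X T := by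
  rw [homCount, Nat.card_congr (homProdEquiv S T X), Nat.card_prod, homCount, homCount]

end Prod

section Cut

variable (S : LevelledMap V) (T : LevelledMap W) (t : ℕ)

def cut : LevelledMap {v // S.height v ≤ t} where
  height v := S.height v.1
  parent v := ⟨S.parent v.1, by rw [S.height_parent]; exact (Nat.sub_le _ _).trans v.2⟩
  height_parent v := S.height_parent _

variable {S T} in
def Iso.cut (e : S.Iso T) : (S.cut t).Iso (T.cut t) :=
  ⟨⟨fun v => ⟨e.1 v.1, by rw [e.2.height_map]; exact v.2⟩,
    fun w => ⟨e.1.symm w.1, by rw [e.2.symm.height_map]; exact w.2⟩,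
    fun v => Subtype.ext (e.1.symm_apply_apply v.1),
    fun w => Subtype.ext (e.1.apply_symm_apply w.1)⟩,
    fun v => e.2.height_map v.1, fun v => Subtype.ext (e.2.map_parent v.1)⟩

def cutProdIso : ((S.prod T).cut t).Iso ((S.cut t).prod (T.cut t)) :=
  ⟨⟨fun x => ⟨(⟨x.1.1.1, x.2⟩, ⟨x.1.1.2, x.1.2 ▸ x.2⟩), x.1.2⟩,
    fun y => ⟨⟨(y.1.1.1, y.1.2.1), y.2⟩, y.1.1.2⟩, fun _ => rfl, fun _ => rfl⟩,
    fun _ => rfl, fun _ => rfl⟩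

end Cut

def ray : LevelledMap ℕ where
  height := id
  parent k := k - 1
  height_parent _ := rfl

lemma isHom_height_ray (X : LevelledMap Z) : X.IsHom ray X.height :=
  ⟨fun _ => rfl, X.height_parent⟩

lemma homCount_cut_eq_zero (S : LevelledMap V) {t : ℕ} {X : LevelledMap Z} (z : Z)
    (hz : t < X.height z) : homCount X (S.cut t) = 0 :=
  have : IsEmpty (X.Hom (S.cut t)) :=
    ⟨fun φ => by
      have := (φ.1 z).2
      have hφ : S.height (φ.1 z).1 = X.height z := φ.2.height_map z
      omega⟩
  Nat.card_of_isEmpty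

lemma homCount_cut_ne_zero {S : LevelledMap V} {t : ℕ} [Finite {v // S.height v ≤ t}]
    {s : ℕ → V} (hs : ray.IsHom S s) {X : LevelledMap Z} [Finite Z]
    (hX : ∀ z, X.height z ≤ t) : homCount X (S.cut t) ≠ 0 := by
  have hsX := (isHom_height_ray X).comp hs
  have : Nonempty (X.Hom (S.cut t)) :=
    ⟨⟨fun z => ⟨s (X.height z), (hsX.height_map z).trans_le (hX z)⟩,
      fun z => hsX.height_map z, fun z => Subtype.ext (hsX.map_parent z)⟩⟩
  exact Nat.card_pos.ne'

lemma Isomorphic.cut_prod {A : LevelledMap V} {B : LevelledMap W} {D : LevelledMap Z}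
    (h : (A.prod B).Isomorphic D) (t : ℕ) : ((A.cut t).prod (B.cut t)).Isomorphic (D.cut t) :=
  h.elim fun e => ⟨(cutProdIso A B t).symm.trans (e.cut t)⟩

theorem homCount_cut_eq_of_prod_isomorphic {U : Type*} {A : LevelledMap U} {s : ℕ → U}
    (hs : ray.IsHom A s) [∀ t, Finite {v // A.height v ≤ t}] {B : LevelledMap V}
    {C : LevelledMap W} {D : LevelledMap Z} (hB : (A.prod B).Isomorphic D)
    (hC : (A.prod C).Isomorphic D) (t : ℕ) {Y : Type*} [Finite Y] (X : LevelledMap Y) :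
    homCount X (B.cut t) = homCount X (C.cut t) := by
  by_cases hX : ∃ z, t < X.height z
  · obtain ⟨z, hz⟩ := hX
    rw [homCount_cut_eq_zero B z hz, homCount_cut_eq_zero C z hz]
  · simp only [not_exists, not_lt] at hX
    refine Nat.eq_of_mul_eq_mul_left (Nat.pos_of_ne_zero (homCount_cut_ne_zero hs hX)) ?_
    rw [← homCount_prod, ← homCount_prod, (hB.cut_prod t).homCount_eq,
      (hC.cut_prod t).homCount_eq]

structure IsCongruence (S : LevelledMap V) (r : Setoid V) : Prop where
  height_eq : ∀ {a b}, r a b → S.height a = S.height b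
  parent_rel : ∀ {a b}, r a b → r (S.parent a) (S.parent b)

def Congruence (S : LevelledMap V) := {r : Setoid V // S.IsCongruence r}

instance (S : LevelledMap V) : Bot S.Congruence :=
  ⟨⟨⊥, fun h => congrArg S.height h, fun h => congrArg S.parent h⟩⟩

instance (S : LevelledMap V) [Finite V] : Finite S.Congruence :=
  Finite.of_injective (fun r : S.Congruence => r.1.r) fun r r' h =>
    Subtype.ext (Setoid.ext fun a b => by simp only at h; rw [h])

def Congruence.quotient {S : LevelledMap V} (r : S.Congruence) : LevelledMap (Quotient r.1) where
  height := Quotient.lift S.height fun _ _ => r.2.height_eq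
  parent := Quotient.map S.parent fun _ _ => r.2.parent_rel
  height_parent := by rintro ⟨v⟩; exact S.height_parent v

lemma Congruence.card_quotient_lt [Finite V] {S : LevelledMap V} {r : S.Congruence}
    (hr : r ≠ ⊥) : Nat.card (Quotient r.1) < Nat.card V := by
  have hsurj : Function.Surjective (Quotient.mk r.1) := Quotient.mk_surjective
  refine (Nat.card_le_card_of_surjective _ hsurj).lt_of_ne fun hcard => hr (Subtype.ext ?_)
  have hinj := ((Nat.bijective_iff_surjective_and_card _).mpr ⟨hsurj, hcard.symm⟩).1
  rw [← Setoid.ker_eq_bot_iff] at hinj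
  exact (Setoid.ker_mk_eq r.1).symm.trans hinj

def Hom.ker {X : LevelledMap Z} {T : LevelledMap W} (φ : X.Hom T) : X.Congruence :=
  ⟨Setoid.ker φ.1,
    fun h => by rw [← φ.2.height_map, ← φ.2.height_map, Setoid.ker_def.mp h],
    fun h => by
      rw [Setoid.ker_def, φ.2.map_parent, φ.2.map_parent, Setoid.ker_def.mp h]⟩

def homKerEquiv {X : LevelledMap Z} (T : LevelledMap W) (r : X.Congruence) :
    {φ : X.Hom T // φ.ker = r} ≃ {ψ : r.quotient.Hom T // Function.Injective ψ.1} where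
  toFun φ :=
    have hker : ∀ a b, r.1 a b ↔ φ.1.1 a = φ.1.1 b := fun a b =>
      Iff.of_eq (congrArg (fun c : X.Congruence => c.1 a b) φ.2).symm
    ⟨⟨Quotient.lift φ.1.1 fun a b h => (hker a b).mp h,
      by rintro ⟨z⟩; exact φ.1.2.height_map z, by rintro ⟨z⟩; exact φ.1.2.map_parent z⟩,
      by rintro ⟨a⟩ ⟨b⟩ h; exact Quotient.sound ((hker a b).mpr h)⟩
  invFun ψ := ⟨⟨ψ.1.1 ∘ Quotient.mk r.1, fun z => ψ.1.2.height_map ⟦z⟧,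
      fun z => ψ.1.2.map_parent ⟦z⟧⟩,
    Subtype.ext (Setoid.ext fun a b =>
      ⟨fun h => Quotient.exact (ψ.2 h), fun h => congrArg ψ.1.1 (Quotient.sound h)⟩)⟩
  left_inv _ := rfl
  right_inv ψ := Subtype.ext (Subtype.ext (funext fun q => by obtain ⟨z⟩ := q; rfl))

lemma homCount_eq_sum_card_ker [Finite Z] [Finite W] (X : LevelledMap Z) (T : LevelledMap W)
    [Fintype X.Congruence] :
    homCount X T = ∑ r : X.Congruence, Nat.card {φ : X.Hom T // φ.ker = r} := by
  rw [homCount, ← Nat.card_sigma, Nat.card_congr (Equiv.sigmaFiberEquiv Hom.ker)]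

lemma card_ker_eq_bot (X : LevelledMap Z) (T : LevelledMap W) :
    Nat.card {φ : X.Hom T // φ.ker = ⊥} = injHomCount X T :=
  Nat.card_congr (Equiv.subtypeEquivRight fun _ =>
    Subtype.ext_iff.trans Setoid.ker_eq_bot_iff)

/-- Lovász's induction on `Nat.card Y`: sorting homomorphisms by kernel, `homCount X T` is
`injHomCount X T` plus injective counts out of strictly smaller quotients of `X`. -/
lemma injHomCount_eq_of_homCount_eq {W' : Type w} (T : LevelledMap W) (T' : LevelledMap W')
    [Finite W] [Finite W']
    (H : ∀ (Y : Type z) [Finite Y] (X : LevelledMap Y), homCount X T = homCount X T')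
    (Y : Type z) [Finite Y] (X : LevelledMap Y) : injHomCount X T = injHomCount X T' := by
  induction hn : Nat.card Y using Nat.strong_induction_on generalizing Y with
  | _ n IH =>
    classical
    have : Fintype X.Congruence := Fintype.ofFinite _
    have hsum := H Y X
    rw [homCount_eq_sum_card_ker, homCount_eq_sum_card_ker,
      ← Finset.add_sum_erase _ _ (Finset.mem_univ ⊥),
      ← Finset.add_sum_erase _ _ (Finset.mem_univ ⊥), card_ker_eq_bot, card_ker_eq_bot,
      Finset.sum_congr rfl fun r hr => ?_] at hsum
    · exact Nat.add_right_cancel hsum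
    · rw [Nat.card_congr (homKerEquiv T r), Nat.card_congr (homKerEquiv T' r)]
      exact IH _ (hn ▸ Congruence.card_quotient_lt (Finset.ne_of_mem_erase hr)) _ _ rfl

lemma injHomCount_self_pos [Finite V] (S : LevelledMap V) : 0 < injHomCount S S :=
  have : Nonempty {φ : S.Hom S // Function.Injective φ.1} :=
    ⟨⟨⟨id, fun _ => rfl, fun _ => rfl⟩, Function.injective_id⟩⟩
  Nat.card_pos

theorem isomorphic_of_homCount_eq {W' : Type w} (T : LevelledMap W) (T' : LevelledMap W')
    [Finite W] [Finite W']
    (H : ∀ (Y : Type v) [Finite Y] (X : LevelledMap Y), homCount X T = homCount X T')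
    (H' : ∀ (Y : Type w) [Finite Y] (X : LevelledMap Y), homCount X T = homCount X T') :
    T.Isomorphic T' := by
  have hT : 0 < injHomCount T T' := by
    rw [← injHomCount_eq_of_homCount_eq T T' H]
    exact injHomCount_self_pos T
  have hT' : 0 < injHomCount T' T := by
    rw [injHomCount_eq_of_homCount_eq T T' H']
    exact injHomCount_self_pos T'
  obtain ⟨⟨φ, hφ⟩, hφinj⟩ := (Nat.card_pos_iff.mp hT).1.some
  obtain ⟨⟨ψ, _⟩, hψinj⟩ := (Nat.card_pos_iff.mp hT').1.some
  have hcard := (Nat.card_le_card_of_injective φ hφinj).antisymm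
    (Nat.card_le_card_of_injective ψ hψinj)
  have hbij := (Nat.bijective_iff_injective_and_card φ).mpr ⟨hφinj, hcard⟩
  exact ⟨⟨Equiv.ofBijective φ hbij, hφ⟩⟩

section Compactness

open CategoryTheory

variable {S : LevelledMap V} {T : LevelledMap W}

def Iso.restrictCut {s t : ℕ} (e : (S.cut t).Iso (T.cut t)) (hst : s ≤ t) :
    (S.cut s).Iso (T.cut s) :=
  ⟨⟨fun v => ⟨(e.1 ⟨v.1, v.2.trans hst⟩).1, (e.2.height_map _).trans_le v.2⟩,
    fun w => ⟨(e.1.symm ⟨w.1, w.2.trans hst⟩).1, (e.2.symm.height_map _).trans_le w.2⟩,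
    fun v => Subtype.ext (congrArg Subtype.val (e.1.symm_apply_apply ⟨v.1, _⟩) :),
    fun w => Subtype.ext (congrArg Subtype.val (e.1.apply_symm_apply ⟨w.1, _⟩) :)⟩,
    fun _ => e.2.height_map _,
    fun v => Subtype.ext (congrArg Subtype.val (e.2.map_parent ⟨v.1, v.2.trans hst⟩) :)⟩

variable (S T) in
def cutIsoFunctor : ℕᵒᵖ ⥤ Type (max u v) where
  obj t := (S.cut t.unop).Iso (T.cut t.unop)
  map f := TypeCat.ofHom fun e => e.restrictCut (leOfHom f.unop)
  map_id _ := rfl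
  map_comp _ _ := rfl

lemma isomorphic_of_compatible (E : ∀ t, (S.cut t).Iso (T.cut t))
    (hE : ∀ {s t} (hst : s ≤ t), (E t).restrictCut hst = E s) : S.Isomorphic T := by
  let φ v := ((E (S.height v)).1 ⟨v, le_rfl⟩).1
  have hφ : ∀ t v (hv : S.height v ≤ t), ((E t).1 ⟨v, hv⟩).1 = φ v := fun t v hv =>
    congrArg (fun e : (S.cut _).Iso (T.cut _) => (e.1 ⟨v, le_rfl⟩).1) (hE hv)
  have hheight : ∀ v, T.height (φ v) = S.height v := fun v => (E _).2.height_map _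
  have hinj : Function.Injective φ := fun v v' h => by
    have hle : S.height v' ≤ S.height v := by rw [← hheight, ← hheight, h]
    rw [← hφ _ v' hle] at h
    exact congrArg Subtype.val ((E _).1.injective (Subtype.ext h))
  have hsurj : Function.Surjective φ := fun w => by
    let v := (E (T.height w)).1.symm ⟨w, le_rfl⟩
    exact ⟨v.1, (hφ _ _ v.2).symm.trans (congrArg Subtype.val ((E _).1.apply_symm_apply _))⟩
  refine ⟨⟨Equiv.ofBijective φ ⟨hinj, hsurj⟩, hheight, fun v => ?_⟩⟩
  have hle : S.height (S.parent v) ≤ S.height v := by rw [S.height_parent]; omega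
  exact (hφ _ _ hle).symm.trans (congrArg Subtype.val ((E _).2.map_parent ⟨v, le_rfl⟩))

theorem isomorphic_of_forall_cut_isomorphic [∀ t, Finite {v // S.height v ≤ t}]
    [∀ t, Finite {w // T.height w ≤ t}] (h : ∀ t, (S.cut t).Isomorphic (T.cut t)) :
    S.Isomorphic T := by
  have : ∀ t : ℕᵒᵖ, Nonempty ((cutIsoFunctor S T).obj t) := fun t => h t.unop
  have : ∀ t : ℕᵒᵖ, Finite ((cutIsoFunctor S T).obj t) := fun _ => Subtype.finite
  obtain ⟨E, hE⟩ := nonempty_sections_of_finite_inverse_system (cutIsoFunctor S T)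
  exact isomorphic_of_compatible (fun t => E (Opposite.op t)) fun hst => hE (homOfLE hst).op

end Compactness

end LevelledMap

namespace DDS

namespace InTree

variable {V V' : Type*}

lemma height_parent_eq_sub_one (T : InTree V) (v : V) :
    T.height (T.parent v) = T.height v - 1 := by
  by_cases hv : v = T.root
  · rw [hv, T.parent_root, T.height_root]
  · rw [T.height_parent hv, Nat.add_sub_cancel]

noncomputable def toLevelledMap (T : InTree V) : LevelledMap V :=
  ⟨T.height, T.parent, T.height_parent_eq_sub_one⟩

lemma height_eq_of (T : InTree V) (ℓ : V → ℕ) (hℓ : ∀ v, ℓ (T.parent v) = ℓ v - 1)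
    (hzero : ∀ v, ℓ v = 0 ↔ v = T.root) (v : V) : T.height v = ℓ v := by
  have hiter : ∀ k, ℓ (T.parent^[k] v) = ℓ v - k := by
    intro k
    induction k with
    | zero => rfl
    | succ k ih => rw [Function.iterate_succ_apply', hℓ, ih, Nat.sub_sub]
  simp only [height, ← hzero, hiter, Nat.sub_eq_zero_iff_le]
  exact csInf_Ici

lemma map_root_of_edge_iff {T : InTree V} {T' : InTree V'} {e : V ≃ V'}
    (he : ∀ u v, T.Edge u v ↔ T'.Edge (e u) (e v)) : e T.root = T'.root := by
  by_contra hne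
  have hedge : T'.Edge (e T.root) (e (e.symm (T'.parent (e T.root)))) := by
    rw [e.apply_symm_apply]; exact ⟨hne, rfl⟩
  exact ((he _ _).mpr hedge).1 rfl

lemma map_parent_of_edge_iff {T : InTree V} {T' : InTree V'} {e : V ≃ V'}
    (he : ∀ u v, T.Edge u v ↔ T'.Edge (e u) (e v)) (v : V) :
    e (T.parent v) = T'.parent (e v) := by
  by_cases hv : v = T.root
  · rw [hv, T.parent_root, map_root_of_edge_iff he, T'.parent_root]
  · exact ((he v (T.parent v)).mp ⟨hv, rfl⟩).2

lemma edge_iff_of_map_root {T : InTree V} {T' : InTree V'} {e : V ≃ V'}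
    (hroot : e T.root = T'.root) (hparent : ∀ v, e (T.parent v) = T'.parent (e v)) (u v : V) :
    T.Edge u v ↔ T'.Edge (e u) (e v) := by
  rw [Edge, Edge, ← hroot, ← hparent, e.injective.ne_iff, e.injective.eq_iff]

lemma isomorphic_toLevelledMap_iff {T : InTree V} {T' : InTree V'} :
    T.toLevelledMap.Isomorphic T'.toLevelledMap ↔ Isomorphic T.Edge T'.Edge := by
  constructor
  · rintro ⟨e, he⟩
    have hroot : e T.root = T'.root :=
      T'.height_eq_zero_iff.mp ((he.height_map T.root).trans T.height_root)
    exact ⟨e, edge_iff_of_map_root hroot he.map_parent⟩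
  · rintro ⟨e, he⟩
    refine ⟨e, fun v => ?_, map_parent_of_edge_iff he⟩
    have hparent : ∀ w, e.symm (T'.parent w) = T.parent (e.symm w) := fun w =>
      e.symm_apply_eq.mpr (by rw [map_parent_of_edge_iff he, e.apply_symm_apply])
    have hheight := T'.height_eq_of (T.height ∘ e.symm)
      (fun w => by rw [Function.comp_apply, Function.comp_apply, hparent,
        height_parent_eq_sub_one])
      (fun w => by rw [Function.comp_apply, T.height_eq_zero_iff, e.symm_apply_eq,
        map_root_of_edge_iff he])
    exact (hheight (e v)).trans (congrArg T.height (e.symm_apply_apply v))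

variable {V₁ V₂ : Type*} (T₁ : InTree V₁) (T₂ : InTree V₂)

lemma star_height (x : StarVertex T₁ T₂) : (T₁.star T₂).height x = T₁.height x.1.1 := by
  refine (T₁.star T₂).height_eq_of (fun x => T₁.height x.1.1)
    (fun x => T₁.height_parent_eq_sub_one x.1.1) (fun x => ⟨fun hx => ?_, ?_⟩) x
  · have hx₂ : x.1.2 = T₂.root := T₂.height_eq_zero_iff.mp (x.2 ▸ hx)
    exact Subtype.ext (Prod.ext (T₁.height_eq_zero_iff.mp hx) hx₂)
  · rintro rfl
    exact T₁.height_root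

lemma star_toLevelledMap_isomorphic :
    (T₁.star T₂).toLevelledMap.Isomorphic (T₁.toLevelledMap.prod T₂.toLevelledMap) :=
  ⟨⟨Equiv.refl _, fun x => (star_height T₁ T₂ x).symm, fun _ => rfl⟩⟩

end InTree

section Unroll

variable {α : Type*} (f : α → α) (a : α)

lemma unroll_height (w : UnrollVertex f a) : (unroll f a).height w = w.1.2 := by
  refine (unroll f a).height_eq_of (fun w => w.1.2) (fun ⟨⟨u, i⟩, _⟩ => by cases i <;> rfl)
    (fun ⟨⟨u, i⟩, hw⟩ => ⟨fun hi => ?_, fun hw' => by rw [hw']; rfl⟩) w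
  dsimp only at hi
  subst hi
  obtain rfl : u = a := hw
  rfl

instance finite_unroll_cut [Finite α] (t : ℕ) :
    Finite {w // (unroll f a).toLevelledMap.height w ≤ t} :=
  Finite.of_injective (fun w => (w.1.1.1, (⟨w.1.1.2,
      (unroll_height f a w.1).symm.trans_lt (Nat.lt_succ_of_le w.2)⟩ : Fin (t + 1))))
    fun w w' hww => by
      simp only [Prod.mk.injEq, Fin.mk.injEq] at hww
      exact Subtype.ext (Subtype.ext (Prod.ext hww.1 hww.2))

lemma exists_ray_unroll {f : α → α} {a : α} (ha : a ∈ Function.periodicPts f) :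
    ∃ s, LevelledMap.ray.IsHom (unroll f a).toLevelledMap s := by
  obtain ⟨n, hn, hfix⟩ := ha
  obtain ⟨m, rfl⟩ : ∃ m, n = m + 1 := ⟨n - 1, by omega⟩
  have hs : ∀ k, f^[k] (f^[m * k] a) = a := fun k => by
    rw [← Function.iterate_add_apply, show k + m * k = (m + 1) * k by ring, Function.iterate_mul,
      Function.iterate_fixed hfix]
  refine ⟨fun k => ⟨(f^[m * k] a, k), hs k⟩, fun k => unroll_height f a _, fun k => ?_⟩
  cases k with
  | zero => rfl
  | succ k =>
    refine Subtype.ext (Prod.ext ?_ rfl)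
    show f^[m * k] a = f (f^[m * (k + 1)] a)
    rw [← Function.iterate_succ_apply' f, Nat.succ_eq_add_one,
      show m * (k + 1) + 1 = m * k + (m + 1) by ring, Function.iterate_add_apply, hfix]

end Unroll

end DDS

open DDS DDS.InTree

theorem unroll_cancellation_general {α γ δ β : Type*} [Fintype α] [Fintype γ] [Fintype δ]
    (f : α → α) (h : γ → γ) (h' : δ → δ) (g : β → β)
    (a : α) (x : γ) (y : δ) (b : β)
    (ha : ∃ n, 1 ≤ n ∧ f^[n] a = a)
    (h1 : Isomorphic ((unroll f a).star (unroll h x)).Edge (unroll g b).Edge)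
    (h2 : Isomorphic ((unroll f a).star (unroll h' y)).Edge (unroll g b).Edge) :
    Isomorphic (unroll h x).Edge (unroll h' y).Edge := by
  obtain ⟨s, hs⟩ := exists_ray_unroll ha
  have hB := (star_toLevelledMap_isomorphic _ _).symm.trans (isomorphic_toLevelledMap_iff.mpr h1)
  have hC := (star_toLevelledMap_isomorphic _ _).symm.trans (isomorphic_toLevelledMap_iff.mpr h2)
  refine isomorphic_toLevelledMap_iff.mp
    (LevelledMap.isomorphic_of_forall_cut_isomorphic fun t => ?_)
  exact LevelledMap.isomorphic_of_homCount_eq _ _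
    (fun _ _ X => LevelledMap.homCount_cut_eq_of_prod_isomorphic hs hB hC t X)
    (fun _ _ X => LevelledMap.homCount_cut_eq_of_prod_isomorphic hs hB hC t X)

/-- Cancellation over unrolls: if `U(f,a) ⋆ U(h,x) ≅ U(g,b)` and `U(f,a) ⋆ U(h',y) ≅ U(g,b)`,
then `U(h,x) ≅ U(h',y)`. -/
theorem unroll_cancellation {α γ δ β : Type*} [Fintype α] [Fintype γ] [Fintype δ] [Fintype β]
    (f : α → α) (h : γ → γ) (h' : δ → δ) (g : β → β)
    (a : α) (x : γ) (y : δ) (b : β)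
    (ha : ∃ n, 1 ≤ n ∧ f^[n] a = a) (hx : ∃ n, 1 ≤ n ∧ h^[n] x = x)
    (hy : ∃ n, 1 ≤ n ∧ h'^[n] y = y) (hb : ∃ n, 1 ≤ n ∧ g^[n] b = b)
    (h1 : Isomorphic ((unroll f a).star (unroll h x)).Edge (unroll g b).Edge)
    (h2 : Isomorphic ((unroll f a).star (unroll h' y)).Edge (unroll g b).Edge) :
    Isomorphic (unroll h x).Edge (unroll h' y).Edge :=
  unroll_cancellation_general f h h' g a x y b ha h1 h2
end

section
/- Upper bound on solutions of the inequality A × X ⊇ B: let f : α → α and g : β → β be connected FGs on finite nonempty types and let p ≥ 1. Then for every m : ℕ and every family of FGs hᵢ : γᵢ → γᵢ (i = 1, …, m) on finite nonempty types such that each hᵢ is connected, each hᵢ has exactly p periodic points, each product FG f × hᵢ contains g (i.e., there is an injection e : β → α × γᵢ with e ∘ g = (f × hᵢ) ∘ e whose range is closed under preimages of f × hᵢ), and the hᵢ are pairwise non-isomorphic as FGs, one has m ≤ (the number of periodic points of f). -/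
open DDS DDS.InTree

/-!
Fix a periodic point `b` of `g`. An embedding of `g` onto a component of `f × hᵢ` sends `b` to a
pair `(aᵢ, cᵢ)` of periodic points, and it suffices to show that `aᵢ = aⱼ` forces `hᵢ ≅ hⱼ`;
then `i ↦ aᵢ` is an injection into the periodic points of `f`.

Unrolling a functional graph at a point gives an in-tree, and the unroll of `g` at `b` is the
levelwise product `⋆` of the unrolls of `f` at `a` and of `hᵢ` at `cᵢ`. Counts of
height-preserving homomorphisms from finite trees are multiplicative for `⋆` and positive for the
unroll of `f` at a periodic point, so the unrolls of `hᵢ` and `hⱼ` at `cᵢ`, `cⱼ`, cut at a finite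
height, have the same counts, and are isomorphic by Lovász's counting argument. Finally a
connected functional graph with a known cycle length is read back from such a cut unroll: a point
`w` is the label of the vertex `(w, d)`, `d` the distance from `w` to the root, and periodic
points are recognised in the tree as the vertices with a long chain of descendants.
-/

open Function

universe u

namespace DDS

section FunctionalGraph

variable {α : Type*} {f : α → α}

lemma exists_iterate_eq_iterate_of_lt_le_card [Finite α] (f : α → α) (x : α) :
    ∃ i j, i < j ∧ j ≤ Nat.card α ∧ f^[i] x = f^[j] x := by
  have := Fintype.ofFinite α
  obtain ⟨i, j, hne, he⟩ := Fintype.exists_ne_map_eq_of_card_lt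
    (fun k : Fin (Nat.card α + 1) => f^[k] x) (by simp [Nat.card_eq_fintype_card])
  rcases lt_or_gt_of_ne (Fin.val_ne_of_ne hne) with hij | hij
  · exact ⟨i, j, hij, Nat.lt_succ_iff.mp j.2, he⟩
  · exact ⟨j, i, hij, Nat.lt_succ_iff.mp i.2, he.symm⟩

lemma iterate_mem_periodicPts_of_card_le [Finite α] (x : α) {n : ℕ} (hn : Nat.card α ≤ n) :
    f^[n] x ∈ periodicPts f := by
  obtain ⟨i, j, hij, hj, he⟩ := exists_iterate_eq_iterate_of_lt_le_card f x
  have hi : f^[i] x ∈ periodicPts f := mk_mem_periodicPts (Nat.sub_pos_of_lt hij) <| by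
    change f^[j - i] (f^[i] x) = f^[i] x
    rw [← iterate_add_apply, Nat.sub_add_cancel hij.le, he]
  rw [← Nat.sub_add_cancel (hij.le.trans (hj.trans hn)), iterate_add_apply]
  exact (bijOn_periodicPts (f := f)).mapsTo.iterate _ hi

lemma exists_iterate_iterate_eq_of_mem_periodicPts {x : α} (hx : x ∈ periodicPts f) (n : ℕ) :
    ∃ k, f^[k] (f^[n] x) = x := by
  obtain ⟨P, hP, hPx⟩ := hx
  refine ⟨P * n - n, ?_⟩
  rw [← iterate_add_apply, Nat.sub_add_cancel (Nat.le_mul_of_pos_left n hP)]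
  exact hPx.mul_const n

lemma FGConnected.exists_iterate_eq_iterate (hf : FGConnected f) (x y : α) :
    ∃ m n, f^[m] x = f^[n] y := by
  induction hf x y with
  | rel a b hab => exact ⟨1, 0, hab⟩
  | refl a => exact ⟨0, 0, rfl⟩
  | symm a b _ ih =>
    obtain ⟨m, n, hmn⟩ := ih
    exact ⟨n, m, hmn.symm⟩
  | trans a b d _ _ ih₁ ih₂ =>
    obtain ⟨m, n, h₁⟩ := ih₁
    obtain ⟨m', n', h₂⟩ := ih₂
    refine ⟨m' + m, n + n', ?_⟩
    rw [iterate_add_apply, h₁, ← iterate_add_apply, add_comm m' n, iterate_add_apply, h₂,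
      ← iterate_add_apply]

structure IsCyclicRoot (f : α → α) (c : α) : Prop where
  mem_periodicPts : c ∈ periodicPts f
  reach : ∀ x, ∃ d, f^[d] x = c

lemma FGConnected.isCyclicRoot (hf : FGConnected f) {c : α} (hc : c ∈ periodicPts f) :
    IsCyclicRoot f c where
  mem_periodicPts := hc
  reach x := by
    obtain ⟨m, n, hmn⟩ := hf.exists_iterate_eq_iterate x c
    obtain ⟨k, hk⟩ := exists_iterate_iterate_eq_of_mem_periodicPts hc n
    exact ⟨k + m, by rw [iterate_add_apply, hmn, hk]⟩

lemma IsCyclicRoot.periodicCount_eq {c : α} (hc : IsCyclicRoot f c) :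
    periodicCount f = minimalPeriod f c := by
  have hrange : periodicPts f = Set.range fun r : Fin (minimalPeriod f c) => f^[r] c := by
    refine Set.Subset.antisymm (fun x hx => ?_) ?_
    · obtain ⟨d, hd⟩ := hc.reach x
      obtain ⟨k, hk⟩ := exists_iterate_iterate_eq_of_mem_periodicPts hx d
      rw [hd, ← iterate_mod_minimalPeriod_eq] at hk
      exact ⟨⟨_, Nat.mod_lt _ (minimalPeriod_pos_of_mem_periodicPts hc.mem_periodicPts)⟩, hk⟩
    · rintro _ ⟨r, rfl⟩
      exact (bijOn_periodicPts (f := f)).mapsTo.iterate _ hc.mem_periodicPts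
  change Nat.card (periodicPts f) = _
  rw [hrange, Nat.card_range_of_injective, Nat.card_eq_fintype_card, Fintype.card_fin]
  exact fun r s hrs => Fin.ext (iterate_injOn_Iio_minimalPeriod r.2 s.2 hrs)

lemma mem_periodicPts_of_comp_eq {β γ : Type*} {g : β → β} {h : γ → γ} {e : β → α × γ}
    (hcomm : e ∘ g = prodMap f h ∘ e) {b : β} (hb : b ∈ periodicPts g) :
    (e b).1 ∈ periodicPts f ∧ (e b).2 ∈ periodicPts h :=
  ⟨(show Semiconj (fun x => (e x).1) g f from
      fun x => congrArg Prod.fst (congrFun hcomm x)).mapsTo_periodicPts hb,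
    (show Semiconj (fun x => (e x).2) g h from
      fun x => congrArg Prod.snd (congrFun hcomm x)).mapsTo_periodicPts hb⟩

end FunctionalGraph

section Distance

variable {γ : Type*} {h : γ → γ} {c w : γ}

noncomputable def distTo (h : γ → γ) (c w : γ) : ℕ := sInf {d | h^[d] w = c}

lemma iterate_distTo (hw : ∃ d, h^[d] w = c) : h^[distTo h c w] w = c := Nat.sInf_mem hw

lemma distTo_le {d : ℕ} (hd : h^[d] w = c) : distTo h c w ≤ d := Nat.sInf_le hd

lemma distTo_self : distTo h c c = 0 := Nat.le_zero.mp (distTo_le rfl)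

lemma distTo_lt_card [Finite γ] (hw : ∃ d, h^[d] w = c) : distTo h c w < Nat.card γ := by
  set d := distTo h c w
  by_contra! hle
  obtain ⟨i, j, hij, hj, he⟩ := exists_iterate_eq_iterate_of_lt_le_card h w
  -- cutting out the loop between steps `i` and `j` reaches `c` sooner
  have hshort : h^[d - (j - i)] w = c := calc
    h^[d - (j - i)] w = h^[d - j] (h^[i] w) := by rw [← iterate_add_apply]; congr 1; omega
    _ = h^[d - j] (h^[j] w) := by rw [he]
    _ = c := by rw [← iterate_add_apply, Nat.sub_add_cancel (by omega), iterate_distTo hw]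
  have := distTo_le hshort
  omega

lemma distTo_apply_add_one (hw : ∃ d, h^[d] w = c) (hwc : w ≠ c) :
    distTo h c (h w) + 1 = distTo h c w := by
  have hpos : distTo h c w ≠ 0 := fun h0 => hwc (by simpa [h0] using iterate_distTo hw)
  have hstep : h^[distTo h c w - 1] (h w) = c := by
    rw [← iterate_succ_apply, Nat.succ_eq_add_one, Nat.sub_add_cancel (Nat.pos_of_ne_zero hpos),
      iterate_distTo hw]
  have h₁ := distTo_le (h := h) (w := w) (d := distTo h c (h w) + 1)
    (by rw [iterate_succ_apply, iterate_distTo ⟨_, hstep⟩])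
  have h₂ := distTo_le hstep
  omega

end Distance

end DDS

namespace DDS.InTree

variable {V W : Type*}

section Height

lemma eq_root_of_parent_eq (T : InTree V) {v : V} (hv : T.parent v = v) : v = T.root := by
  obtain ⟨k, hk⟩ := T.reaches_root v
  rwa [iterate_fixed hv] at hk

lemma iterate_parent_eq_root_iff (T : InTree V) {v : V} {k : ℕ} :
    T.parent^[k] v = T.root ↔ T.height v ≤ k := by
  refine ⟨fun hk => Nat.sInf_le hk, fun hk => ?_⟩
  rw [← Nat.sub_add_cancel hk, iterate_add_apply, T.height_spec, iterate_fixed T.parent_root]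

lemma height_eq_of_forall_iff (T : InTree V) {v : V} {n : ℕ}
    (h : ∀ k, T.parent^[k] v = T.root ↔ n ≤ k) : T.height v = n :=
  le_antisymm (T.iterate_parent_eq_root_iff.mp ((h n).mpr le_rfl)) ((h _).mp (T.height_spec v))

lemma height_iterate_parent (T : InTree V) (v : V) (k : ℕ) :
    T.height (T.parent^[k] v) = T.height v - k :=
  T.height_eq_of_forall_iff fun j => by
    rw [← iterate_add_apply, iterate_parent_eq_root_iff]
    omega

lemma star_height_s15 {V₁ V₂ : Type*} (A : InTree V₁) (B : InTree V₂) (x : StarVertex A B) :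
    (star A B).height x = A.height x.1.1 :=
  (star A B).height_eq_of_forall_iff fun k => Subtype.ext_iff.trans <| by
    change ((starParent A B)^[k] x).1 = (A.root, B.root) ↔ _
    rw [starParent_iterate, Prod.mk.injEq, iterate_parent_eq_root_iff,
      iterate_parent_eq_root_iff, ← x.2, and_self]

lemma cut_height (T : InTree V) (t : ℕ) (x : CutVertex T t) :
    (cut T t).height x = T.height x.1 :=
  (cut T t).height_eq_of_forall_iff fun k => Subtype.ext_iff.trans <| by
    change ((cutParent T t)^[k] x).1 = T.root ↔ _
    rw [cutParent_iterate, iterate_parent_eq_root_iff]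

lemma cut_height_le (T : InTree V) (t : ℕ) (x : CutVertex T t) : (cut T t).height x ≤ t :=
  (cut_height T t x).trans_le x.2

end Height

structure IsStrictHom (T : InTree V) (T' : InTree W) (τ : V → W) : Prop where
  semiconj : Semiconj τ T.parent T'.parent
  height_map : ∀ v, T'.height (τ v) = T.height v

lemma IsStrictHom.comp {U : Type*} {T : InTree U} {T' : InTree V} {T'' : InTree W}
    {σ : V → W} {τ : U → V} (hσ : IsStrictHom T' T'' σ) (hτ : IsStrictHom T T' τ) :
    IsStrictHom T T'' (σ ∘ τ) :=
  ⟨hσ.semiconj.comp_left hτ.semiconj, fun v => (hσ.height_map _).trans (hτ.height_map v)⟩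

structure Iso (T : InTree V) (T' : InTree W) extends V ≃ W where
  semiconj : Semiconj toEquiv T.parent T'.parent

namespace Iso

variable {T : InTree V} {T' : InTree W}

instance : CoeFun (Iso T T') (fun _ => V → W) := ⟨fun Ψ => Ψ.toEquiv⟩

lemma injective (Ψ : Iso T T') : Injective Ψ := Ψ.toEquiv.injective

lemma map_root (Ψ : Iso T T') : Ψ T.root = T'.root :=
  T'.eq_root_of_parent_eq (by rw [← Ψ.semiconj, T.parent_root])

lemma height_map (Ψ : Iso T T') (v : V) : T'.height (Ψ v) = T.height v :=
  T'.height_eq_of_forall_iff fun k => by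
    rw [← Ψ.semiconj.iterate_right k v, ← Ψ.map_root, Ψ.injective.eq_iff,
      iterate_parent_eq_root_iff]

lemma isStrictHom (Ψ : Iso T T') : IsStrictHom T T' Ψ := ⟨Ψ.semiconj, Ψ.height_map⟩

def symm (Ψ : Iso T T') : Iso T' T where
  toEquiv := Ψ.toEquiv.symm
  semiconj := Ψ.semiconj.inverse_left Ψ.left_inv Ψ.right_inv

@[simp] lemma symm_apply_apply (Ψ : Iso T T') (v : V) : Ψ.symm (Ψ v) = v :=
  Ψ.toEquiv.symm_apply_apply v

@[simp] lemma apply_symm_apply (Ψ : Iso T T') (w : W) : Ψ (Ψ.symm w) = w :=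
  Ψ.toEquiv.apply_symm_apply w

def trans {U : Type*} {T'' : InTree U} (Ψ : Iso T T') (Φ : Iso T' T'') : Iso T T'' where
  toEquiv := Ψ.toEquiv.trans Φ.toEquiv
  semiconj := Φ.semiconj.comp_left Ψ.semiconj

noncomputable def ofBijective {τ : V → W} (hτ : Semiconj τ T.parent T'.parent)
    (hbij : Bijective τ) : Iso T T' where
  toEquiv := Equiv.ofBijective τ hbij
  semiconj := hτ

end Iso

section Counting

variable {U : Type*}

noncomputable def strictHomCount (T : InTree V) (T' : InTree W) : ℕ :=
  Nat.card {τ : V → W // IsStrictHom T T' τ}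

noncomputable def strictEmbCount (T : InTree V) (T' : InTree W) : ℕ :=
  Nat.card {τ : V → W // IsStrictHom T T' τ ∧ Injective τ}

lemma strictHomCount_congr (T : InTree U) {Z : InTree V} {Z' : InTree W} (Ψ : Iso Z Z') :
    strictHomCount T Z = strictHomCount T Z' :=
  Nat.card_congr
    { toFun := fun τ => ⟨Ψ ∘ τ.1, Ψ.isStrictHom.comp τ.2⟩
      invFun := fun σ => ⟨Ψ.symm ∘ σ.1, Ψ.symm.isStrictHom.comp σ.2⟩
      left_inv := fun _ => Subtype.ext (funext fun _ => Ψ.symm_apply_apply _)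
      right_inv := fun _ => Subtype.ext (funext fun _ => Ψ.apply_symm_apply _) }

lemma strictHomCount_star {V₁ V₂ : Type*} (T : InTree U) (A : InTree V₁) (B : InTree V₂) :
    strictHomCount T (star A B) = strictHomCount T A * strictHomCount T B := by
  rw [strictHomCount, strictHomCount, strictHomCount, ← Nat.card_prod]
  refine Nat.card_congr
    { toFun := fun τ =>
        (⟨fun v => (τ.1 v).1.1, fun v => congrArg (fun x => x.1.1) (τ.2.semiconj v),
            fun v => (star_height_s15 A B _).symm.trans (τ.2.height_map v)⟩,
          ⟨fun v => (τ.1 v).1.2, fun v => congrArg (fun x => x.1.2) (τ.2.semiconj v),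
            fun v => (τ.1 v).2.symm.trans <|
              (star_height_s15 A B _).symm.trans (τ.2.height_map v)⟩)
      invFun := fun σ =>
        ⟨fun v => ⟨(σ.1.1 v, σ.2.1 v), by rw [σ.1.2.height_map, σ.2.2.height_map]⟩,
          fun v => Subtype.ext (Prod.ext (σ.1.2.semiconj v) (σ.2.2.semiconj v)),
          fun v => (star_height_s15 A B _).trans (σ.1.2.height_map v)⟩
      left_inv := fun _ => rfl
      right_inv := fun _ => rfl }

lemma strictHomCount_cut (T : InTree U) (Z : InTree W) {t : ℕ} (hT : ∀ v, T.height v ≤ t) :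
    strictHomCount T (cut Z t) = strictHomCount T Z :=
  Nat.card_congr
    { toFun := fun τ => ⟨fun v => (τ.1 v).1, fun v => congrArg Subtype.val (τ.2.semiconj v),
        fun v => (cut_height Z t _).symm.trans (τ.2.height_map v)⟩
      invFun := fun σ => ⟨fun v => ⟨σ.1 v, (σ.2.height_map v).trans_le (hT v)⟩,
        fun v => Subtype.ext (σ.2.semiconj v),
        fun v => (cut_height Z t _).trans (σ.2.height_map v)⟩
      left_inv := fun _ => rfl
      right_inv := fun _ => rfl }

lemma strictHomCount_pos [Finite U] [Finite W] (T : InTree U) (Z : InTree W) {H : ℕ}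
    (hT : ∀ v, T.height v ≤ H) {z : W} (hz : Z.height z = H) : 0 < strictHomCount T Z := by
  -- send `v` to the ancestor of `z` at height `T.height v`
  set τ : U → W := fun v => Z.parent^[H - T.height v] z
  have hroot : τ T.root = Z.root := by
    simp only [τ, height_root, Nat.sub_zero, iterate_parent_eq_root_iff, hz, le_rfl]
  have hτ : IsStrictHom T Z τ := by
    refine ⟨fun v => ?_, fun v => ?_⟩
    · by_cases hv : v = T.root
      · rw [hv, T.parent_root, hroot, Z.parent_root]
      · have := T.height_parent hv
        have := hT v
        simp only [τ, ← iterate_succ_apply' Z.parent]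
        congr 1
        omega
    · have := hT v
      simp only [τ, height_iterate_parent, hz]
      omega
  exact Nat.card_pos_iff.mpr ⟨⟨⟨τ, hτ⟩⟩, inferInstance⟩

end Counting

section Quotient

structure IsCompatible (T : InTree V) (s : Setoid V) : Prop where
  parent : ∀ ⦃a b⦄, s a b → s (T.parent a) (T.parent b)
  height : ∀ ⦃a b⦄, s a b → T.height a = T.height b

variable (T : InTree V) {s : Setoid V}

lemma isCompatible_ker {Z : InTree W} {τ : V → W} (hτ : IsStrictHom T Z τ) :
    T.IsCompatible (Setoid.ker τ) where
  parent a b hab := by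
    simp only [Setoid.ker_def, hτ.semiconj a, hτ.semiconj b] at hab ⊢
    rw [hab]
  height a b hab := by
    rw [← hτ.height_map a, ← hτ.height_map b, Setoid.ker_def.mp hab]

lemma card_ker_eq_zero (hs : ¬ T.IsCompatible s) (Z : InTree W) :
    Nat.card {τ : V → W // IsStrictHom T Z τ ∧ Setoid.ker τ = s} = 0 :=
  have : IsEmpty {τ : V → W // IsStrictHom T Z τ ∧ Setoid.ker τ = s} :=
    ⟨fun τ => hs (τ.2.2 ▸ isCompatible_ker T τ.2.1)⟩
  Nat.card_of_isEmpty

variable (hs : T.IsCompatible s)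

lemma semiconj_quotient_mk :
    Semiconj (Quotient.mk s) T.parent (Quotient.map T.parent hs.parent) :=
  fun _ => rfl

def quotient : InTree (Quotient s) where
  root := ⟦T.root⟧
  parent := Quotient.map T.parent hs.parent
  parent_root := congrArg _ T.parent_root
  reaches_root := Quotient.ind fun v =>
    ⟨T.height v, by rw [← (semiconj_quotient_mk T hs).iterate_right, T.height_spec]⟩

lemma quotient_height (v : V) : (T.quotient hs).height ⟦v⟧ = T.height v :=
  (T.quotient hs).height_eq_of_forall_iff fun k => by
    change (Quotient.map T.parent hs.parent)^[k] ⟦v⟧ = ⟦T.root⟧ ↔ _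
    rw [← (semiconj_quotient_mk T hs).iterate_right, Quotient.eq, ← iterate_parent_eq_root_iff]
    refine ⟨fun h => T.height_eq_zero_iff.mp ?_, fun h => h ▸ Setoid.refl _⟩
    rw [hs.height h, height_root]

lemma isStrictHom_quotient_mk : IsStrictHom T (T.quotient hs) (Quotient.mk s) :=
  ⟨semiconj_quotient_mk T hs, quotient_height T hs⟩

lemma card_ker_eq_strictEmbCount_quotient (Z : InTree W) :
    Nat.card {τ : V → W // IsStrictHom T Z τ ∧ Setoid.ker τ = s} =
      strictEmbCount (T.quotient hs) Z :=
  Nat.card_congr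
    { toFun := fun τ =>
        ⟨Quotient.lift τ.1 fun a b hab => Setoid.ker_def.mp (τ.2.2.symm ▸ hab),
          ⟨Quotient.ind fun a => τ.2.1.semiconj a,
            Quotient.ind fun a => (τ.2.1.height_map a).trans (quotient_height T hs a).symm⟩,
          Quotient.ind₂ fun a b hab => Quotient.sound (τ.2.2 ▸ Setoid.ker_def.mpr hab)⟩
      invFun := fun σ => ⟨σ.1 ∘ Quotient.mk s, σ.2.1.comp (isStrictHom_quotient_mk T hs),
        Setoid.ext fun a b => by
          rw [Setoid.ker_def, comp_apply, comp_apply, σ.2.2.eq_iff, Quotient.eq]⟩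
      left_inv := fun _ => rfl
      right_inv := fun σ => Subtype.ext (funext (Quotient.ind fun _ => rfl)) }

end Quotient

section Cancellation

instance [Finite V] : Finite (Setoid V) :=
  Finite.of_injective (fun s : Setoid V => ⇑s) fun _ _ h =>
    Setoid.ext fun a b => Iff.of_eq (congrFun (congrFun h a) b)

noncomputable instance [Finite V] : Fintype (Setoid V) := Fintype.ofFinite _

lemma strictHomCount_eq_sum_ker [Finite V] [Finite W] (T : InTree V) (Z : InTree W) :
    strictHomCount T Z =
      ∑ s : Setoid V, Nat.card {τ : V → W // IsStrictHom T Z τ ∧ Setoid.ker τ = s} := by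
  rw [strictHomCount, ← Nat.card_sigma]
  exact Nat.card_congr <| (Equiv.sigmaFiberEquiv fun τ : {τ // IsStrictHom T Z τ} =>
    Setoid.ker τ.1).symm.trans <| Equiv.sigmaCongrRight fun s =>
      Equiv.subtypeSubtypeEquivSubtypeInter (fun τ => IsStrictHom T Z τ) (Setoid.ker · = s)

lemma card_quotient_lt [Finite V] {s : Setoid V} (hs : s ≠ ⊥) :
    Nat.card (Quotient s) < Nat.card V := by
  refine (Nat.card_le_card_of_surjective _ Quotient.mk_surjective).lt_of_ne fun h => hs ?_
  rw [← Setoid.ker_mk_eq s, Setoid.ker_eq_bot_iff]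
  exact ((Nat.bijective_iff_surjective_and_card _).mpr ⟨Quotient.mk_surjective, h.symm⟩).1

/-- Lovász's argument: Möbius inversion over kernels, by induction on the size of the source. -/
theorem strictEmbCount_eq_of_strictHomCount_eq {VX VY : Type*} [Finite VX] [Finite VY]
    {X : InTree VX} {Y : InTree VY} {H : ℕ}
    (hXY : ∀ (V : Type u) [Finite V] (T : InTree V), (∀ v, T.height v ≤ H) →
      strictHomCount T X = strictHomCount T Y)
    (V : Type u) [Finite V] (T : InTree V) (hT : ∀ v, T.height v ≤ H) :
    strictEmbCount T X = strictEmbCount T Y := by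
  induction hn : Nat.card V using Nat.strong_induction_on generalizing V with
  | _ n ih =>
  classical
  have hker : ∀ s ∈ ({⊥}ᶜ : Finset (Setoid V)),
      Nat.card {τ // IsStrictHom T X τ ∧ Setoid.ker τ = s} =
        Nat.card {τ // IsStrictHom T Y τ ∧ Setoid.ker τ = s} := by
    intro s hs
    replace hs : s ≠ ⊥ := by simpa using hs
    by_cases hsT : T.IsCompatible s
    · rw [card_ker_eq_strictEmbCount_quotient T hsT, card_ker_eq_strictEmbCount_quotient T hsT]
      exact ih _ (hn ▸ card_quotient_lt hs) (Quotient s) (T.quotient hsT)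
        (Quotient.ind fun v => (quotient_height T hsT v).trans_le (hT v)) rfl
    · rw [card_ker_eq_zero T hsT, card_ker_eq_zero T hsT]
  have hsum := hXY V T hT
  rw [strictHomCount_eq_sum_ker, strictHomCount_eq_sum_ker, Fintype.sum_eq_add_sum_compl ⊥,
    Fintype.sum_eq_add_sum_compl ⊥, Finset.sum_congr rfl hker, add_left_inj] at hsum
  simpa only [strictEmbCount, Setoid.ker_eq_bot_iff] using hsum

lemma exists_injective_strictHom_of_strictHomCount_eq {VX VY : Type u} [Finite VX] [Finite VY]
    {X : InTree VX} {Y : InTree VY} {H : ℕ} (hX : ∀ v, X.height v ≤ H)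
    (hXY : ∀ (V : Type u) [Finite V] (T : InTree V), (∀ v, T.height v ≤ H) →
      strictHomCount T X = strictHomCount T Y) :
    ∃ τ : VX → VY, IsStrictHom X Y τ ∧ Injective τ := by
  have hpos : 0 < strictEmbCount X X :=
    Nat.card_pos_iff.mpr ⟨⟨⟨id, ⟨fun _ => rfl, fun _ => rfl⟩, injective_id⟩⟩, inferInstance⟩
  rw [strictEmbCount_eq_of_strictHomCount_eq hXY VX X hX, strictEmbCount,
    Nat.card_pos_iff] at hpos
  obtain ⟨⟨τ, hτ⟩⟩ := hpos.1
  exact ⟨τ, hτ⟩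

theorem nonempty_iso_of_strictHomCount_eq {VX VY : Type u} [Finite VX] [Finite VY]
    {X : InTree VX} {Y : InTree VY} {H : ℕ} (hX : ∀ v, X.height v ≤ H)
    (hY : ∀ v, Y.height v ≤ H)
    (hXY : ∀ (V : Type u) [Finite V] (T : InTree V), (∀ v, T.height v ≤ H) →
      strictHomCount T X = strictHomCount T Y) :
    Nonempty (Iso X Y) := by
  obtain ⟨τ, hτ, hτinj⟩ := exists_injective_strictHom_of_strictHomCount_eq hX hXY
  obtain ⟨σ, -, hσinj⟩ := exists_injective_strictHom_of_strictHomCount_eq hY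
    fun V _ T hT => (hXY V T hT).symm
  have hcard := (Nat.card_le_card_of_injective τ hτinj).antisymm
    (Nat.card_le_card_of_injective σ hσinj)
  exact ⟨Iso.ofBijective hτ.semiconj
    ((Nat.bijective_iff_injective_and_card τ).mpr ⟨hτinj, hcard⟩)⟩

end Cancellation

section Unroll

variable {α β γ : Type*}

lemma unrollParent_iterate_val (f : α → α) (a : α) (k : ℕ) (x : UnrollVertex f a) :
    ((unrollParent f a)^[k] x).1 = (f^[min k x.1.2] x.1.1, x.1.2 - k) := by
  induction k generalizing x with
  | zero => simp
  | succ k ih =>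
    obtain ⟨⟨u, _ | i⟩, hx⟩ := x
    · exact (ih _).trans (by simp [unrollParent])
    · exact (ih _).trans (by simp [unrollParent, Nat.succ_min_succ, iterate_succ_apply])

lemma unroll_height (f : α → α) (a : α) (x : UnrollVertex f a) :
    (unroll f a).height x = x.1.2 :=
  (unroll f a).height_eq_of_forall_iff fun k => Subtype.ext_iff.trans <| by
    change ((unrollParent f a)^[k] x).1 = (a, 0) ↔ _
    rw [unrollParent_iterate_val, Prod.mk.injEq]
    refine ⟨fun h => by omega, fun h => ⟨?_, by omega⟩⟩
    rw [min_eq_right h]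
    exact x.2

lemma mem_range_of_iterate_mem_range {F : α → α} {e : β → α}
    (hclosed : ∀ z, F z ∈ Set.range e → z ∈ Set.range e) (k : ℕ) {z : α}
    (hz : F^[k] z ∈ Set.range e) : z ∈ Set.range e := by
  induction k generalizing z with
  | zero => exact hz
  | succ k ih => exact hclosed z (ih (by rwa [← iterate_succ_apply]))

noncomputable def unrollIsoOfEmbedding {F : α → α} {g : β → β} {e : β → α} (hinj : Injective e)
    (hcomm : Semiconj e g F) (hclosed : ∀ z, F z ∈ Set.range e → z ∈ Set.range e) (b : β) :
    Iso (unroll g b) (unroll F (e b)) := by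
  refine Iso.ofBijective (τ := fun x => ⟨(e x.1.1, x.1.2), by rw [← hcomm.iterate_right, x.2]⟩)
    ?_ ⟨fun x y hxy => ?_, fun z => ?_⟩
  · rintro ⟨⟨y, _ | k⟩, hy⟩
    · rfl
    · exact Subtype.ext (Prod.ext (hcomm y) rfl)
  · obtain ⟨h1, h2⟩ := Prod.mk.inj (congrArg Subtype.val hxy)
    exact Subtype.ext (Prod.ext (hinj h1) h2)
  · obtain ⟨⟨z, k⟩, hz⟩ := z
    have hz' : F^[k] z ∈ Set.range e := ⟨b, hz.symm⟩
    obtain ⟨y, rfl⟩ := mem_range_of_iterate_mem_range hclosed k hz'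
    refine ⟨⟨(y, k), hinj ?_⟩, rfl⟩
    rw [hcomm.iterate_right]
    exact hz

lemma prodMap_iterate (f : α → α) (h : γ → γ) (k : ℕ) (z : α × γ) :
    (prodMap f h)^[k] z = (f^[k] z.1, h^[k] z.2) :=
  congrFun (Prod.map_iterate f h k) z

noncomputable def unrollProdIso (f : α → α) (h : γ → γ) (a : α) (c : γ) :
    Iso (unroll (prodMap f h) (a, c)) (star (unroll f a) (unroll h c)) := by
  refine Iso.ofBijective (τ := fun x => ⟨(⟨(x.1.1.1, x.1.2), congrArg Prod.fst
      ((prodMap_iterate f h _ _).symm.trans x.2)⟩, ⟨(x.1.1.2, x.1.2), congrArg Prod.snd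
      ((prodMap_iterate f h _ _).symm.trans x.2)⟩), by rw [unroll_height, unroll_height]⟩)
    ?_ ⟨fun x y hxy => ?_, fun z => ?_⟩
  · rintro ⟨⟨z, _ | k⟩, hz⟩ <;> rfl
  · have h1 := Prod.mk.inj (congrArg (fun z => z.1.1.1) hxy)
    have h2 := Prod.mk.inj (congrArg (fun z => z.1.2.1) hxy)
    exact Subtype.ext (Prod.ext (Prod.ext h1.1 h2.1) h1.2)
  · obtain ⟨⟨⟨⟨u, k⟩, hu⟩, ⟨⟨w, l⟩, hw⟩⟩, hkl⟩ := z
    obtain rfl : k = l := by rwa [unroll_height, unroll_height] at hkl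
    exact ⟨⟨((u, w), k), by rw [prodMap_iterate, hu, hw]⟩, rfl⟩

namespace CutVertex

variable {h : γ → γ} {c : γ} {t : ℕ}

def label (x : CutVertex (unroll h c) t) : γ := x.1.1.1

def depth (x : CutVertex (unroll h c) t) : ℕ := x.1.1.2

def ofIterate (w : γ) (k : ℕ) (hw : h^[k] w = c) (hk : k ≤ t) : CutVertex (unroll h c) t :=
  ⟨⟨(w, k), hw⟩, (unroll_height h c _).trans_le hk⟩

@[simp] lemma label_ofIterate {w : γ} {k : ℕ} (hw : h^[k] w = c) (hk : k ≤ t) :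
    (ofIterate w k hw hk).label = w := rfl

@[simp] lemma depth_ofIterate {w : γ} {k : ℕ} (hw : h^[k] w = c) (hk : k ≤ t) :
    (ofIterate w k hw hk).depth = k := rfl

lemma iterate_depth_label (x : CutVertex (unroll h c) t) : h^[x.depth] x.label = c := x.1.2

lemma height_eq_depth (x : CutVertex (unroll h c) t) :
    (cut (unroll h c) t).height x = x.depth :=
  (cut_height _ t x).trans (unroll_height h c x.1)

lemma depth_le (x : CutVertex (unroll h c) t) : x.depth ≤ t :=
  (unroll_height h c x.1).symm.trans_le x.2

lemma ext {x y : CutVertex (unroll h c) t} (hl : x.label = y.label) (hd : x.depth = y.depth) :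
    x = y :=
  Subtype.ext (Subtype.ext (Prod.ext hl hd))

lemma val_iterate_parent (k : ℕ) (x : CutVertex (unroll h c) t) :
    ((cut (unroll h c) t).parent^[k] x).1.1 = (h^[min k x.depth] x.label, x.depth - k) := by
  rw [show ((cut (unroll h c) t).parent^[k] x).1 = (unroll h c).parent^[k] x.1 from
    cutParent_iterate _ t k x]
  exact unrollParent_iterate_val h c k x.1

lemma label_iterate_parent (k : ℕ) (x : CutVertex (unroll h c) t) :
    ((cut (unroll h c) t).parent^[k] x).label = h^[min k x.depth] x.label :=
  congrArg Prod.fst (val_iterate_parent k x)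

lemma depth_iterate_parent (k : ℕ) (x : CutVertex (unroll h c) t) :
    ((cut (unroll h c) t).parent^[k] x).depth = x.depth - k :=
  congrArg Prod.snd (val_iterate_parent k x)

lemma label_parent {x : CutVertex (unroll h c) t} (hx : x.depth ≠ 0) :
    ((cut (unroll h c) t).parent x).label = h x.label := by
  simpa [Nat.one_le_iff_ne_zero.mpr hx] using label_iterate_parent 1 x

/-- Periodic points are exactly the points with a `D`-step preimage, so periodicity of labels is
visible in the tree as long as `D` levels remain above the vertex. -/
lemma label_mem_periodicPts_iff [Finite γ] (hc : c ∈ periodicPts h) {D : ℕ}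
    (hD : Nat.card γ ≤ D) (x : CutVertex (unroll h c) t) (hx : x.depth + D ≤ t) :
    x.label ∈ periodicPts h ↔ ∃ y, (cut (unroll h c) t).parent^[D] y = x := by
  constructor
  · intro hper
    obtain ⟨u, -, hu⟩ := ((bijOn_periodicPts (f := h)).iterate D).surjOn hper
    refine ⟨.ofIterate u (x.depth + D) ?_ hx, ext ?_ ?_⟩
    · rw [iterate_add_apply, hu, iterate_depth_label]
    · rw [label_iterate_parent, depth_ofIterate, min_eq_left (by omega), label_ofIterate, hu]
    · rw [depth_iterate_parent, depth_ofIterate, Nat.add_sub_cancel]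
  · rintro ⟨y, rfl⟩
    rw [label_iterate_parent]
    rcases le_total D y.depth with hy | hy
    · rw [min_eq_left hy]
      exact iterate_mem_periodicPts_of_card_le _ hD
    · rw [min_eq_right hy, iterate_depth_label]
      exact hc

instance [Finite γ] : Finite (CutVertex (unroll h c) t) :=
  Finite.of_injective
    (fun x => (x.label, (⟨x.depth, Nat.lt_succ_of_le x.depth_le⟩ : Fin (t + 1))))
    fun _ _ hxy => ext (Prod.mk.inj hxy).1 (Fin.val_eq_of_eq (Prod.mk.inj hxy).2)

end CutVertex

lemma exists_height_eq_of_mem_periodicPts {f : α → α} {a : α} (ha : a ∈ periodicPts f)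
    (t : ℕ) : ∃ x : CutVertex (unroll f a) t, (cut (unroll f a) t).height x = t := by
  obtain ⟨u, -, hu⟩ := ((bijOn_periodicPts (f := f)).iterate t).surjOn ha
  exact ⟨.ofIterate u t hu le_rfl, CutVertex.height_eq_depth _⟩

end Unroll

section Reconstruction

variable {γ γ' : Type*} {h : γ → γ} {h' : γ' → γ'} {c : γ} {c' : γ'} {t D : ℕ}

namespace Iso

variable (Ψ : Iso (cut (unroll h c) t) (cut (unroll h' c') t))

lemma depth_map (x : CutVertex (unroll h c) t) : (Ψ x).depth = x.depth := by
  rw [← CutVertex.height_eq_depth, Ψ.height_map, CutVertex.height_eq_depth]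

lemma label_map_mem_periodicPts_iff [Finite γ] [Finite γ'] (hc : c ∈ periodicPts h)
    (hc' : c' ∈ periodicPts h') (hD : Nat.card γ ≤ D) (hD' : Nat.card γ' ≤ D)
    (x : CutVertex (unroll h c) t) (hx : x.depth + D ≤ t) :
    (Ψ x).label ∈ periodicPts h' ↔ x.label ∈ periodicPts h := by
  rw [CutVertex.label_mem_periodicPts_iff hc' hD' _ (by rwa [depth_map]),
    CutVertex.label_mem_periodicPts_iff hc hD x hx]
  constructor
  · rintro ⟨y, hy⟩
    refine ⟨Ψ.symm y, Ψ.injective ?_⟩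
    rw [Ψ.semiconj.iterate_right, apply_symm_apply, hy]
  · rintro ⟨y, rfl⟩
    exact ⟨Ψ y, (Ψ.semiconj.iterate_right D y).symm⟩

end Iso

/-- The vertex `(w, distTo h c w)` has depth `< D`, leaving the `D` levels above it that
`CutVertex.label_mem_periodicPts_iff` needs. -/
noncomputable def distVertex [Finite γ] (hr : IsCyclicRoot h c) (hD : Nat.card γ ≤ D) (w : γ) :
    CutVertex (unroll h c) (2 * D) :=
  .ofIterate w (distTo h c w) (iterate_distTo (hr.reach w))
    (by have := distTo_lt_card (hr.reach w); omega)

@[simp] lemma label_distVertex [Finite γ] (hr : IsCyclicRoot h c) (hD : Nat.card γ ≤ D)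
    (w : γ) : (distVertex hr hD w).label = w := rfl

@[simp] lemma depth_distVertex [Finite γ] (hr : IsCyclicRoot h c) (hD : Nat.card γ ≤ D)
    (w : γ) : (distVertex hr hD w).depth = distTo h c w := rfl

namespace Iso

variable (Ψ : Iso (cut (unroll h c) (2 * D)) (cut (unroll h' c') (2 * D)))

noncomputable def labelMap [Finite γ] (hr : IsCyclicRoot h c) (hD : Nat.card γ ≤ D) (w : γ) :
    γ' :=
  (Ψ (distVertex hr hD w)).label

lemma labelMap_root [Finite γ] (hr : IsCyclicRoot h c) (hD : Nat.card γ ≤ D) :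
    Ψ.labelMap hr hD c = c' := by
  have : distVertex hr hD c = (cut (unroll h c) (2 * D)).root :=
    CutVertex.ext rfl distTo_self
  rw [labelMap, this, Ψ.map_root]
  rfl

lemma labelMap_mem_periodicPts_iff [Finite γ] [Finite γ'] (hr : IsCyclicRoot h c)
    (hr' : IsCyclicRoot h' c') (hD : Nat.card γ ≤ D) (hD' : Nat.card γ' ≤ D) (w : γ) :
    Ψ.labelMap hr hD w ∈ periodicPts h' ↔ w ∈ periodicPts h :=
  Ψ.label_map_mem_periodicPts_iff hr.mem_periodicPts hr'.mem_periodicPts hD hD' _ <| by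
    have := distTo_lt_card (hr.reach w)
    rw [depth_distVertex]
    omega

lemma semiconj_labelMap [Finite γ] [Finite γ'] (hr : IsCyclicRoot h c)
    (hr' : IsCyclicRoot h' c') (hD : Nat.card γ ≤ D) (hD' : Nat.card γ' ≤ D)
    (hp : minimalPeriod h c = minimalPeriod h' c') :
    Semiconj (Ψ.labelMap hr hD) h h' := by
  intro w
  by_cases hw : w = c
  · -- both sides are periodic points that `h'^[distTo h c (h c)]` sends to `c'`
    rw [hw, labelMap_root]
    have hk : h'^[distTo h c (h c)] (Ψ.labelMap hr hD (h c)) = c' := by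
      have := (Ψ (distVertex hr hD (h c))).iterate_depth_label
      rwa [depth_map] at this
    have hk' : IsPeriodicPt h' (distTo h c (h c) + 1) c' := by
      rw [isPeriodicPt_iff_minimalPeriod_dvd, ← hp, ← isPeriodicPt_iff_minimalPeriod_dvd]
      exact iterate_distTo (hr.reach (h c))
    have hper' := (bijOn_periodicPts (f := h')).mapsTo
    exact ((bijOn_periodicPts (f := h')).injOn.iterate hper' _)
      ((Ψ.labelMap_mem_periodicPts_iff hr hr' hD hD' _).mpr
        ((bijOn_periodicPts (f := h)).mapsTo hr.mem_periodicPts))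
      (hper' hr'.mem_periodicPts) (hk.trans hk'.symm)
  · have hdist := distTo_apply_add_one (hr.reach w) hw
    have hpos : (distVertex hr hD w).depth ≠ 0 := by rw [depth_distVertex]; omega
    have hstep : distVertex hr hD (h w) =
        (cut (unroll h c) (2 * D)).parent (distVertex hr hD w) := by
      refine CutVertex.ext (by rw [CutVertex.label_parent hpos]; rfl) ?_
      rw [← iterate_one (cut (unroll h c) (2 * D)).parent, CutVertex.depth_iterate_parent]
      simp only [depth_distVertex]
      omega
    rw [labelMap, labelMap, hstep, Ψ.semiconj, CutVertex.label_parent (by rwa [depth_map])]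

lemma labelMap_eq_root_iff [Finite γ] [Finite γ'] (hr : IsCyclicRoot h c)
    (hr' : IsCyclicRoot h' c') (hD : Nat.card γ ≤ D) (hD' : Nat.card γ' ≤ D)
    (hp : minimalPeriod h c = minimalPeriod h' c') {w : γ} :
    Ψ.labelMap hr hD w = c' ↔ w = c := by
  refine ⟨fun hw => ?_, fun hw => hw ▸ Ψ.labelMap_root hr hD⟩
  have hper : w ∈ periodicPts h :=
    (Ψ.labelMap_mem_periodicPts_iff hr hr' hD hD' w).mp (by rw [hw]; exact hr'.mem_periodicPts)
  set d := distTo h c w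
  have hwc : h^[d] w = c := iterate_distTo (hr.reach w)
  -- `h'^[d]` fixes `c'`, so the common minimal period of `c'`, `c` and `w` divides `d`
  have hfix : IsPeriodicPt h' d c' := by
    change h'^[d] c' = c'
    conv_lhs => rw [← hw]
    rw [← (Ψ.semiconj_labelMap hr hr' hD hD' hp).iterate_right, hwc, labelMap_root]
  have hwd : IsPeriodicPt h d w := by
    rwa [isPeriodicPt_iff_minimalPeriod_dvd, ← minimalPeriod_apply_iterate hper d, hwc, hp,
      ← isPeriodicPt_iff_minimalPeriod_dvd]
  exact hwd.eq.symm.trans hwc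

lemma distTo_labelMap [Finite γ] [Finite γ'] (hr : IsCyclicRoot h c)
    (hr' : IsCyclicRoot h' c') (hD : Nat.card γ ≤ D) (hD' : Nat.card γ' ≤ D)
    (hp : minimalPeriod h c = minimalPeriod h' c') (w : γ) :
    distTo h' c' (Ψ.labelMap hr hD w) = distTo h c w := by
  refine congrArg sInf (Set.ext fun d => ?_)
  rw [Set.mem_ofPred_eq, Set.mem_ofPred_eq, ← (Ψ.semiconj_labelMap hr hr' hD hD' hp).iterate_right,
    Ψ.labelMap_eq_root_iff hr hr' hD hD' hp]

lemma map_distVertex [Finite γ] [Finite γ'] (hr : IsCyclicRoot h c)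
    (hr' : IsCyclicRoot h' c') (hD : Nat.card γ ≤ D) (hD' : Nat.card γ' ≤ D)
    (hp : minimalPeriod h c = minimalPeriod h' c') (w : γ) :
    Ψ (distVertex hr hD w) = distVertex hr' hD' (Ψ.labelMap hr hD w) :=
  CutVertex.ext rfl <| by
    rw [depth_map, depth_distVertex, depth_distVertex, Ψ.distTo_labelMap hr hr' hD hD' hp]

lemma symm_labelMap_labelMap [Finite γ] [Finite γ'] (hr : IsCyclicRoot h c)
    (hr' : IsCyclicRoot h' c') (hD : Nat.card γ ≤ D) (hD' : Nat.card γ' ≤ D)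
    (hp : minimalPeriod h c = minimalPeriod h' c') (w : γ) :
    Ψ.symm.labelMap hr' hD' (Ψ.labelMap hr hD w) = w := by
  rw [labelMap, ← Ψ.map_distVertex hr hr' hD hD' hp, symm_apply_apply, label_distVertex]

end Iso

theorem fgIso_of_iso_cut_unroll [Finite γ] [Finite γ'] (hr : IsCyclicRoot h c)
    (hr' : IsCyclicRoot h' c') (hD : Nat.card γ ≤ D) (hD' : Nat.card γ' ≤ D)
    (hp : minimalPeriod h c = minimalPeriod h' c')
    (Ψ : Iso (cut (unroll h c) (2 * D)) (cut (unroll h' c') (2 * D))) : FGIso h h' :=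
  ⟨⟨Ψ.labelMap hr hD, Ψ.symm.labelMap hr' hD', Ψ.symm_labelMap_labelMap hr hr' hD hD' hp,
    Ψ.symm.symm_labelMap_labelMap hr' hr hD' hD hp.symm⟩, Ψ.semiconj_labelMap hr hr' hD hD' hp⟩

end Reconstruction

end DDS.InTree

namespace DDS

theorem fgIso_of_fst_eq {α β : Type*} [Finite α] {γ γ' : Type u} [Finite γ] [Finite γ']
    {f : α → α} {g : β → β} {h : γ → γ} {h' : γ' → γ'} (hh : FGConnected h)
    (hh' : FGConnected h') (hp : periodicCount h = periodicCount h') {e : β → α × γ}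
    {e' : β → α × γ'}
    (he : Injective e ∧ e ∘ g = prodMap f h ∘ e ∧
      ∀ z, prodMap f h z ∈ Set.range e → z ∈ Set.range e)
    (he' : Injective e' ∧ e' ∘ g = prodMap f h' ∘ e' ∧
      ∀ z, prodMap f h' z ∈ Set.range e' → z ∈ Set.range e')
    {b : β} (hb : b ∈ periodicPts g) (hfst : (e b).1 = (e' b).1) : FGIso h h' := by
  obtain ⟨hinj, hcomm, hclosed⟩ := he
  obtain ⟨hinj', hcomm', hclosed'⟩ := he'
  obtain ⟨ha, hc⟩ := mem_periodicPts_of_comp_eq hcomm hb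
  have hr := hh.isCyclicRoot hc
  have hr' := hh'.isCyclicRoot (mem_periodicPts_of_comp_eq hcomm' hb).2
  set D := max (Nat.card γ) (Nat.card γ')
  have I := (unrollIsoOfEmbedding hinj (fun x => congrFun hcomm x) hclosed b).trans
    (unrollProdIso f h _ _)
  have I' := (unrollIsoOfEmbedding hinj' (fun x => congrFun hcomm' x) hclosed' b).trans
    (unrollProdIso f h' _ _)
  rw [← hfst] at I'
  obtain ⟨z, hz⟩ := exists_height_eq_of_mem_periodicPts ha (2 * D)
  obtain ⟨Ψ⟩ : Nonempty (Iso (cut (unroll h (e b).2) (2 * D)) (cut (unroll h' (e' b).2) (2 * D))) :=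
    nonempty_iso_of_strictHomCount_eq (cut_height_le _ _) (cut_height_le _ _) fun V _ T hT => by
      have hpos := strictHomCount_pos T _ hT hz
      rw [strictHomCount_cut _ _ hT] at hpos
      rw [strictHomCount_cut _ _ hT, strictHomCount_cut _ _ hT]
      refine Nat.eq_of_mul_eq_mul_left hpos ?_
      rw [← strictHomCount_star, ← strictHomCount_star, ← strictHomCount_congr T I,
        strictHomCount_congr T I']
  refine fgIso_of_iso_cut_unroll hr hr' (le_max_left _ _) (le_max_right _ _) ?_ Ψ
  rw [← hr.periodicCount_eq, ← hr'.periodicCount_eq, hp]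

end DDS

theorem upper_bound_solutions_general {α β : Type*} [Fintype α] [Fintype β] [Nonempty β]
    (f : α → α) (g : β → β)
    (p : ℕ)
    (m : ℕ) (γ : Fin m → Type*) [∀ i, Fintype (γ i)]
    (h : ∀ i, γ i → γ i)
    (hconn : ∀ i, FGConnected (h i))
    (hper : ∀ i, periodicCount (h i) = p)
    (hcont : ∀ i, FGContains f (h i) g)
    (hnoniso : ∀ i j, i ≠ j → ¬ FGIso (h i) (h j)) :
    m ≤ periodicCount f := by
  obtain ⟨x⟩ := ‹Nonempty β›
  have hb := iterate_mem_periodicPts_of_card_le (f := g) x le_rfl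
  choose e he using hcont
  let F : Fin m → periodicPts f := fun i =>
    ⟨(e i _).1, (mem_periodicPts_of_comp_eq (he i).2.1 hb).1⟩
  have hF : Injective F := fun i j hij => by_contra fun hne => hnoniso i j hne <|
    fgIso_of_fst_eq (hconn i) (hconn j) ((hper i).trans (hper j).symm) (he i) (he j) hb
      (congrArg Subtype.val hij)
  exact (Nat.card_fin m).symm.trans_le (Nat.card_le_card_of_injective F hF)

/-- Upper bound on the number of solutions of `A × X ⊇ B`: any family of pairwise
non-isomorphic connected FGs `hᵢ`, each with exactly `p` periodic points and each with
`f × hᵢ ⊇ g`, has at most `|𝒫_A|` members. -/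
theorem upper_bound_solutions {α β : Type*} [Fintype α] [Fintype β] [Nonempty α] [Nonempty β]
    (f : α → α) (g : β → β) (hf : FGConnected f) (hg : FGConnected g)
    (p : ℕ) (hp : 1 ≤ p)
    (m : ℕ) (γ : Fin m → Type*) [∀ i, Fintype (γ i)] [∀ i, Nonempty (γ i)]
    (h : ∀ i, γ i → γ i)
    (hconn : ∀ i, FGConnected (h i))
    (hper : ∀ i, periodicCount (h i) = p)
    (hcont : ∀ i, FGContains f (h i) g)
    (hnoniso : ∀ i j, i ≠ j → ¬ FGIso (h i) (h j)) :
    m ≤ periodicCount f :=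
  upper_bound_solutions_general f g p m γ h hconn hper hcont hnoniso
end
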